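/- For every integer m ≥ 0, setting t = (L_{2m}² + √(L_{2m}⁴ + 8·L_{2m}² − 16))/4, one has π/4 = ∑_{n=0}^∞ ((−1)^n/(2n+1)) · L_{2m(2n+1)}² / (t + √(t² + 1))^{2n+1}, where the series on the right converges. -/

import Mathlib

/-- Lucas numbers: `L 0 = 2`, `L 1 = 1`, `L (n+2) = L (n+1) + L n`. -/
def lucasNum : ℕ → ℕ
  | 0 => 2
  | 1 => 1
  | n + 2 => lucasNum (n + 1) + lucasNum n

lemma lucas_one_le : ∀ n : ℕ, 1 ≤ lucasNum n ∧ 1 ≤ lucasNum (n + 1) := by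
  intro n
  induction n with
  | zero => exact ⟨by norm_num [lucasNum], by norm_num [lucasNum]⟩
  | succ k ih =>
    refine ⟨ih.2, ?_⟩
    show 1 ≤ lucasNum (k + 1) + lucasNum k
    omega

lemma lucas_even_ge : ∀ m : ℕ, 2 ≤ lucasNum (2 * m) := by
  intro m
  induction m with
  | zero => norm_num [lucasNum]
  | succ k ih =>
    have h1 := (lucas_one_le (2 * k)).2
    have : 2 * (k + 1) = 2 * k + 1 + 1 := by ring
    rw [this]
    show 2 ≤ lucasNum (2 * k + 1) + lucasNum (2 * k)
    omega

lemma lucas_binet : ∀ n : ℕ,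
    (lucasNum n : ℝ) = ((1 + Real.sqrt 5) / 2) ^ n + ((1 - Real.sqrt 5) / 2) ^ n
  | 0 => by norm_num [lucasNum]
  | 1 => by norm_num [lucasNum]
  | (n + 2) => by
    have hs : Real.sqrt 5 ^ 2 = 5 := Real.sq_sqrt (by norm_num)
    have hφ : ((1 + Real.sqrt 5) / 2) ^ 2 = (1 + Real.sqrt 5) / 2 + 1 := by nlinarith [hs]
    have hψ : ((1 - Real.sqrt 5) / 2) ^ 2 = (1 - Real.sqrt 5) / 2 + 1 := by nlinarith [hs]
    have hrec : lucasNum (n + 2) = lucasNum (n + 1) + lucasNum n := rfl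
    rw [hrec]
    push_cast [lucas_binet (n + 1), lucas_binet n]
    linear_combination ((1 + Real.sqrt 5) / 2) ^ n * hφ + ((1 - Real.sqrt 5) / 2) ^ n * hψ - (((1 + Real.sqrt 5) / 2) ^ n + ((1 - Real.sqrt 5) / 2) ^ n) / 2 * hs

set_option maxHeartbeats 1000000 in
lemma pi_aux (a b t L : ℝ) (hab : a * b = 1) (ha1 : 1 ≤ a) (hb0 : 0 < b)
    (hb1 : b ≤ 1) (hL : L = a + b) (hL2 : 2 ≤ L) (ht0 : 0 < t)
    (htL : L ^ 2 / 2 ≤ t) (hqt : 2 * t ^ 2 = t * L ^ 2 + L ^ 2 - 2) :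
    HasSum
      (fun n : ℕ => (-1 : ℝ) ^ n / (2 * (n : ℝ) + 1) *
        ((a ^ (2 * n + 1) + b ^ (2 * n + 1)) ^ 2 /
          (t + Real.sqrt (t ^ 2 + 1)) ^ (2 * n + 1)))
      (Real.pi / 4) := by
  have ha0 : 0 < a := lt_of_lt_of_le one_pos ha1
  set y : ℝ := t + Real.sqrt (t ^ 2 + 1) with hydef
  have hst : Real.sqrt (t ^ 2 + 1) ^ 2 = t ^ 2 + 1 := Real.sq_sqrt (by positivity)
  have hsty : t < Real.sqrt (t ^ 2 + 1) := by nlinarith [Real.sqrt_nonneg (t ^ 2 + 1)]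
  have hy2t : 2 * t < y := by rw [hydef]; linarith
  have hy0 : 0 < y := by linarith
  have hysq : y ^ 2 - 1 = 2 * t * y := by rw [hydef]; nlinarith [hst]
  have hyL : L ^ 2 < y := by linarith
  have hya : a ^ 2 < y := by nlinarith
  have hyb : b ^ 2 < y := by nlinarith
  have hy1 : 1 < y := by nlinarith
  -- the three arctan series
  have hx1 : ‖a ^ 2 / y‖ < 1 := by
    rw [Real.norm_eq_abs, abs_of_pos (by positivity), div_lt_one hy0]; exact hya
  have hx2 : ‖b ^ 2 / y‖ < 1 := by
    rw [Real.norm_eq_abs, abs_of_pos (by positivity), div_lt_one hy0]; exact hyb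
  have hx3 : ‖1 / y‖ < 1 := by
    rw [Real.norm_eq_abs, abs_of_pos (by positivity), div_lt_one hy0]; exact hy1
  have h1 := Real.hasSum_arctan hx1
  have h2 := Real.hasSum_arctan hx2
  have h3 := (Real.hasSum_arctan hx3).mul_left 2
  have hsum := (h1.add h2).add h3
  -- the value of the sum is π/4
  have hx12 : a ^ 2 / y * (b ^ 2 / y) = 1 / y ^ 2 := by
    rw [div_mul_div_comm, ← mul_pow, hab, one_pow]; ring_nf
  have hx12lt : a ^ 2 / y * (b ^ 2 / y) < 1 := by
    rw [hx12, div_lt_one (by positivity)]; nlinarith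
  have hx33lt : 1 / y * (1 / y) < 1 := by
    rw [div_mul_div_comm, one_mul, div_lt_one (by positivity)]; nlinarith [hy1, hy0]
  have hABlt : (L ^ 2 - 2) / (2 * t) * (1 / t) < 1 := by
    rw [div_mul_div_comm, mul_one, div_lt_one (by positivity)]; nlinarith
  have hC1 : (a ^ 2 / y + b ^ 2 / y) / (1 - a ^ 2 / y * (b ^ 2 / y)) =
      (L ^ 2 - 2) / (2 * t) := by
    rw [hx12]
    have hnum : a ^ 2 / y + b ^ 2 / y = (L ^ 2 - 2) / y := by
      rw [← add_div]; congr 1; nlinarith [hL, hab]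
    have hden : 1 - 1 / y ^ 2 = 2 * t / y := by
      rw [eq_div_iff (ne_of_gt hy0)]
      field_simp
      nlinarith [hysq]
    rw [hnum, hden, div_div_div_eq]
    rw [div_eq_div_iff (by positivity) (by positivity)]; ring
  have hC2 : (1 / y + 1 / y) / (1 - 1 / y * (1 / y)) = 1 / t := by
    have hden : 1 - 1 / y * (1 / y) = 2 * t / y := by
      rw [div_mul_div_comm, one_mul, ← sq, eq_div_iff (ne_of_gt hy0)]
      field_simp
      nlinarith [hysq]
    rw [hden, ← add_div, div_div_div_eq]
    rw [div_eq_div_iff (by positivity) (ne_of_gt ht0)]; ring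
  have hval : Real.arctan (a ^ 2 / y) + Real.arctan (b ^ 2 / y) +
      2 * Real.arctan (1 / y) = Real.pi / 4 := by
    rw [two_mul, Real.arctan_add hx12lt, Real.arctan_add hx33lt, hC1, hC2,
      Real.arctan_add hABlt]
    have hone : ((L ^ 2 - 2) / (2 * t) + 1 / t) / (1 - (L ^ 2 - 2) / (2 * t) * (1 / t)) =
        1 := by
      rw [div_eq_one_iff_eq (by nlinarith [hABlt])]
      field_simp
      nlinarith [hqt]
    rw [hone, Real.arctan_one]
  rw [← hval]
  have hfun : (fun n : ℕ => (-1 : ℝ) ^ n / (2 * (n : ℝ) + 1) *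
        ((a ^ (2 * n + 1) + b ^ (2 * n + 1)) ^ 2 / y ^ (2 * n + 1))) =
      fun n : ℕ => (-1 : ℝ) ^ n * (a ^ 2 / y) ^ (2 * n + 1) / (2 * n + 1 : ℕ) +
        (-1 : ℝ) ^ n * (b ^ 2 / y) ^ (2 * n + 1) / (2 * n + 1 : ℕ) +
        2 * ((-1 : ℝ) ^ n * (1 / y) ^ (2 * n + 1) / (2 * n + 1 : ℕ)) := by
    funext n
    have habn : a ^ (2 * n + 1) * b ^ (2 * n + 1) = 1 := by
      rw [← mul_pow, hab, one_pow]
    have key : (a ^ (2 * n + 1) + b ^ (2 * n + 1)) ^ 2 =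
        (a ^ 2) ^ (2 * n + 1) + (b ^ 2) ^ (2 * n + 1) + 2 := by
      calc (a ^ (2 * n + 1) + b ^ (2 * n + 1)) ^ 2
          = (a ^ 2) ^ (2 * n + 1) + (b ^ 2) ^ (2 * n + 1) +
            2 * (a ^ (2 * n + 1) * b ^ (2 * n + 1)) := by ring
        _ = _ := by rw [habn]; ring
    have hyn : y ^ (2 * n + 1) ≠ 0 := pow_ne_zero _ (ne_of_gt hy0)
    have hn0 : (2 * (n : ℝ) + 1) ≠ 0 := by positivity
    rw [key, div_pow, div_pow, div_pow, one_pow]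
    push_cast
    ring
  rw [hfun]
  exact hsum

set_option maxHeartbeats 1000000 in
theorem pi_div_four_lucas_squared_series (m : ℕ) (t : ℝ)
    (ht : t = ((lucasNum (2 * m) : ℝ) ^ 2 +
      Real.sqrt ((lucasNum (2 * m) : ℝ) ^ 4 +
        8 * (lucasNum (2 * m) : ℝ) ^ 2 - 16)) / 4) :
    HasSum
      (fun n : ℕ => (-1 : ℝ) ^ n / (2 * (n : ℝ) + 1) *
        ((lucasNum (2 * m * (2 * n + 1)) : ℝ) ^ 2 /
          (t + Real.sqrt (t ^ 2 + 1)) ^ (2 * n + 1)))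
      (Real.pi / 4) := by
  have hs : Real.sqrt 5 ^ 2 = 5 := Real.sq_sqrt (by norm_num)
  have hs1 : (1 : ℝ) ≤ Real.sqrt 5 := by nlinarith [Real.sqrt_nonneg 5, hs]
  set a : ℝ := ((1 + Real.sqrt 5) / 2) ^ (2 * m) with hadef
  set b : ℝ := ((1 - Real.sqrt 5) / 2) ^ (2 * m) with hbdef
  set L : ℝ := (lucasNum (2 * m) : ℝ) with hLdef
  have hab : a * b = 1 := by
    rw [hadef, hbdef, ← mul_pow]
    have h : (1 + Real.sqrt 5) / 2 * ((1 - Real.sqrt 5) / 2) = -1 := by nlinarith [hs]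
    rw [h, pow_mul]; norm_num
  have ha1 : 1 ≤ a := one_le_pow₀ (by linarith)
  have hb0 : 0 < b := by nlinarith [lt_of_lt_of_le one_pos ha1]
  have hb1 : b ≤ 1 := by nlinarith [lt_of_lt_of_le one_pos ha1]
  have hL : L = a + b := by rw [hLdef, lucas_binet]
  have hL2 : (2 : ℝ) ≤ L := by rw [hLdef]; exact_mod_cast lucas_even_ge m
  have hD0 : (0 : ℝ) ≤ L ^ 4 + 8 * L ^ 2 - 16 := by nlinarith
  have hsD : Real.sqrt (L ^ 4 + 8 * L ^ 2 - 16) ^ 2 = L ^ 4 + 8 * L ^ 2 - 16 :=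
    Real.sq_sqrt hD0
  have hsD2 : L ^ 2 ≤ Real.sqrt (L ^ 4 + 8 * L ^ 2 - 16) := by
    have h := Real.sqrt_le_sqrt (show (L ^ 2) ^ 2 ≤ L ^ 4 + 8 * L ^ 2 - 16 by nlinarith)
    rwa [Real.sqrt_sq (by positivity)] at h
  have htL : L ^ 2 / 2 ≤ t := by rw [ht]; linarith
  have ht0 : 0 < t := by nlinarith
  have hqt : 2 * t ^ 2 = t * L ^ 2 + L ^ 2 - 2 := by
    have h4 : 4 * t - L ^ 2 = Real.sqrt (L ^ 4 + 8 * L ^ 2 - 16) := by rw [ht]; ring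
    nlinarith [hsD, h4]
  have haux := pi_aux a b t L hab ha1 hb0 hb1 hL hL2 ht0 htL hqt
  have hfun : (fun n : ℕ => (-1 : ℝ) ^ n / (2 * (n : ℝ) + 1) *
        ((lucasNum (2 * m * (2 * n + 1)) : ℝ) ^ 2 /
          (t + Real.sqrt (t ^ 2 + 1)) ^ (2 * n + 1))) =
      fun n : ℕ => (-1 : ℝ) ^ n / (2 * (n : ℝ) + 1) *
        ((a ^ (2 * n + 1) + b ^ (2 * n + 1)) ^ 2 /
          (t + Real.sqrt (t ^ 2 + 1)) ^ (2 * n + 1)) := by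
    funext n
    rw [lucas_binet, pow_mul ((1 + Real.sqrt 5) / 2) (2 * m) (2 * n + 1),
      pow_mul ((1 - Real.sqrt 5) / 2) (2 * m) (2 * n + 1), ← hadef, ← hbdef]
  rw [hfun]
  exact haux
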